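/- Let S be a nonempty finite set with uniform probabilities, Q : S → ℝ, and α ∈ (0,1). For the sample-average CVaR objective g(u) = u + (1/((1−α)|S|))·∑_{s∈S} max(Q(s) − u, 0), any u* ∈ ℝ maximizing the empirical α-quantile condition, in particular u* = Q(s*) where s* achieves the ⌈α|S|⌉-th order statistic, satisfies g(u*) = min_u g(u). -/

import Mathlib

/-!
For `κ > 0` the map `u ↦ κ u + ∑ s, (Q s - u)⁺` is convex and piecewise linear, with right slope
`κ - #{s | u < Q s}` and left slope `κ - #{s | u ≤ Q s}` at `u`. Hence `t` minimizes it exactly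
when `#{s | t < Q s} ≤ κ ≤ #{s | t ≤ Q s}`. With `κ = (1 - α)|S|` these are the two order-statistic
conditions on `t = Q s*`, and dividing by `κ` gives the Rockafellar–Uryasev objective.
-/

open Finset

section

variable {ι : Type*} [Fintype ι] (Q : ι → ℝ) {t u : ℝ}

lemma max_sub_le_max_sub_add_ite (q : ℝ) (htu : t ≤ u) :
    max (q - t) 0 ≤ max (q - u) 0 + if t < q then u - t else 0 := by
  split_ifs with h
  · exact max_le (by linarith [le_max_left (q - u) 0]) (by linarith [le_max_right (q - u) 0, htu])
  · rw [max_eq_right (by linarith : q - t ≤ 0), add_zero]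
    exact le_max_right _ _

lemma max_sub_add_ite_le_max_sub (q : ℝ) (hut : u ≤ t) :
    max (q - t) 0 + (if t ≤ q then t - u else 0) ≤ max (q - u) 0 := by
  split_ifs with h
  · rw [max_eq_left (by linarith : 0 ≤ q - t), max_eq_left (by linarith : 0 ≤ q - u)]
    linarith
  · rw [max_eq_right (by linarith : q - t ≤ 0), add_zero]
    exact le_max_right _ _

lemma sum_max_sub_le_add_card_mul (htu : t ≤ u) :
    ∑ s, max (Q s - t) 0 ≤ ∑ s, max (Q s - u) 0 + #{s | t < Q s} * (u - t) := by
  rw [← nsmul_eq_mul, ← sum_const, sum_filter, ← sum_add_distrib]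
  exact sum_le_sum fun s _ => max_sub_le_max_sub_add_ite (Q s) htu

lemma sum_max_sub_add_card_mul_le (hut : u ≤ t) :
    ∑ s, max (Q s - t) 0 + #{s | t ≤ Q s} * (t - u) ≤ ∑ s, max (Q s - u) 0 := by
  rw [← nsmul_eq_mul, ← sum_const, sum_filter, ← sum_add_distrib]
  exact sum_le_sum fun s _ => max_sub_add_ite_le_max_sub (Q s) hut

lemma mul_add_sum_max_sub_le {κ : ℝ} (hgt : (#{s | t < Q s} : ℝ) ≤ κ)
    (hge : κ ≤ #{s | t ≤ Q s}) (u : ℝ) :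
    κ * t + ∑ s, max (Q s - t) 0 ≤ κ * u + ∑ s, max (Q s - u) 0 := by
  rcases le_total t u with htu | hut
  · have := sum_max_sub_le_add_card_mul Q htu
    nlinarith [mul_le_mul_of_nonneg_right hgt (sub_nonneg.2 htu)]
  · have := sum_max_sub_add_card_mul_le Q hut
    nlinarith [mul_le_mul_of_nonneg_right hge (sub_nonneg.2 hut)]

lemma card_filter_lt_eq_card_sub (t : ℝ) :
    (#{s | t < Q s} : ℝ) = Fintype.card ι - #{s | Q s ≤ t} := by
  have := card_filter_add_card_filter_not (s := univ) (fun s => Q s ≤ t)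
  simp only [not_le, card_univ] at this
  rw [eq_sub_iff_add_eq, add_comm]
  exact_mod_cast this

lemma card_filter_le_eq_card_sub (t : ℝ) :
    (#{s | t ≤ Q s} : ℝ) = Fintype.card ι - #{s | Q s < t} := by
  have := card_filter_add_card_filter_not (s := univ) (fun s => Q s < t)
  simp only [not_lt, card_univ] at this
  rw [eq_sub_iff_add_eq, add_comm]
  exact_mod_cast this

end

theorem empirical_var_minimizes_ru_general {S : Type*} [Fintype S]
    (Q : S → ℝ) (α : ℝ) (hα : α ∈ Set.Ioo (0 : ℝ) 1)
    (g : ℝ → ℝ)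
    (hg : ∀ u, g u = u + (1 / ((1 - α) * (Fintype.card S : ℝ))) * ∑ s : S, max (Q s - u) 0)
    (sstar : S)
    (h1 : α * (Fintype.card S : ℝ) ≤ ((Finset.univ.filter fun s => Q s ≤ Q sstar).card : ℝ))
    (h2 : ((Finset.univ.filter fun s => Q s < Q sstar).card : ℝ) < α * (Fintype.card S : ℝ)) :
    ∀ u : ℝ, g (Q sstar) ≤ g u := by
  intro u
  set κ := (1 - α) * (Fintype.card S : ℝ)
  have hκ : 0 < κ :=
    mul_pos (sub_pos.2 hα.2) (by exact_mod_cast Fintype.card_pos_iff.2 ⟨sstar⟩)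
  have hmin := mul_add_sum_max_sub_le Q (κ := κ)
    (by rw [card_filter_lt_eq_card_sub]; linarith) (by rw [card_filter_le_eq_card_sub]; linarith) u
  have hg_div : ∀ v, g v = (κ * v + ∑ s, max (Q s - v) 0) / κ := fun v => by
    rw [hg]; field_simp
  rw [hg_div, hg_div]
  exact div_le_div_of_nonneg_right hmin hκ.le

/-- Discrete Rockafellar–Uryasev minimization: with `S` equally likely scenarios and
costs `Q`, if `u* = Q s*` is an empirical `α`-quantile of the scenario costs (i.e. the
`⌈α|S|⌉`-th order statistic, characterized by
`#{s : Q s ≤ Q s*} ≥ α|S|` and `#{s : Q s < Q s*} < α|S|`), then `u*` minimizes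
`g u = u + (1/((1−α)|S|))·∑_s max(Q s − u, 0)`. -/
theorem empirical_var_minimizes_ru {S : Type*} [Fintype S] [Nonempty S]
    (Q : S → ℝ) (α : ℝ) (hα : α ∈ Set.Ioo (0 : ℝ) 1)
    (g : ℝ → ℝ)
    (hg : ∀ u, g u = u + (1 / ((1 - α) * (Fintype.card S : ℝ))) * ∑ s : S, max (Q s - u) 0)
    (sstar : S)
    (h1 : α * (Fintype.card S : ℝ) ≤ ((Finset.univ.filter fun s => Q s ≤ Q sstar).card : ℝ))
    (h2 : ((Finset.univ.filter fun s => Q s < Q sstar).card : ℝ) < α * (Fintype.card S : ℝ)) :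
    ∀ u : ℝ, g (Q sstar) ≤ g u :=
  empirical_var_minimizes_ru_general Q α hα g hg sstar h1 h2
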